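/- arXiv:nlin/0603017 — 4 statements merged into one kernel-verified Lean document; each statement's English description precedes it below -/
import Mathlib

section
/- Let ħ>0 and define for u ∈ ℝ the functions I(x,y)=exp(−(1/ħ)e^{x−y}), J_u(x,y)=exp((i/ħ)u(x−y) − (1/ħ)e^{y−x}), and Y_u(x,z)=(1+e^{x−z})^{(i/ħ)u}. Then for all real x_k, x_{k+1}, z_{k−1}, z_k and real γ, γ', the following exchange identity holds: ∫_ℝ I(x_k,y) J_{γ}(x_{k+1},y) I(y,z_k) J_{γ'}(y,z_{k−1}) dy · Y_{γ−γ'}(x_k,z_{k−1}) = Y_{γ−γ'}(x_{k+1},z_k) · ∫_ℝ I(x_k,y) J_{γ'}(x_{k+1},y) I(y,z_k) J_{γ}(y,z_{k−1}) dy. -/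
open MeasureTheory

noncomputable section

/-- Kernel `I(x,y) = exp(−(1/hbar) e^{x−y})`. -/
def Iker (hbar x y : ℝ) : ℂ := Complex.exp (-(1 / hbar : ℝ) * Real.exp (x - y))

/-- Kernel `J_u(x,y) = exp((i/hbar)u(x−y) − (1/hbar) e^{y−x})`. -/
def Jker (hbar u x y : ℝ) : ℂ :=
  Complex.exp (Complex.I / hbar * u * (x - y) - (1 / hbar : ℝ) * Real.exp (y - x))

/-- Kernel `Y_u(x,z) = (1 + e^{x−z})^{(i/hbar)u}`. -/
def Yker (hbar u x z : ℝ) : ℂ :=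
  ((1 + Real.exp (x - z) : ℝ) : ℂ) ^ (Complex.I / hbar * u)

/-!
Up to the oscillating factor, the integrand `I(x,y) J_γ(x',y) I(y,z') J_γ'(y,z)` is
`exp(-(a e^{-y} + b e^y)/ħ)` with `a = e^x + e^z` and `b = e^{-x'} + e^{-z'}`, and this is invariant
under the reflection `y ↦ c - y` with `e^c = a / b`. Substituting `y ↦ c - y` in one integral
therefore only changes the phase, and the change is linear in `γ - γ'`: it is exactly
`(γ - γ') (log a - log b) / ħ`, which is what the ratio of the two `Y` factors contributes, since
`log (1 + e^{x-z}) = log a - z` and `log (1 + e^{x'-z'}) = x' + log b`.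
-/

theorem Yker_eq_exp (hbar u x z : ℝ) :
    Yker hbar u x z = Complex.exp (Complex.I / hbar * u * Real.log (1 + Real.exp (x - z))) := by
  have hpos : (0 : ℝ) < 1 + Real.exp (x - z) := by positivity
  rw [Yker, Complex.cpow_def_of_ne_zero (mod_cast hpos.ne'), ← Complex.ofReal_log hpos.le,
    mul_comm]

theorem Real.log_one_add_exp_sub_eq_log_add_sub (x z : ℝ) :
    Real.log (1 + Real.exp (x - z)) = Real.log (Real.exp x + Real.exp z) - z := by
  have h : 1 + Real.exp (x - z) = Real.exp (-z) * (Real.exp x + Real.exp z) := by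
    rw [mul_add, ← Real.exp_add, ← Real.exp_add, neg_add_cancel, Real.exp_zero, neg_add_eq_sub,
      add_comm]
  have hsum : Real.exp x + Real.exp z ≠ 0 := by positivity
  rw [h, Real.log_mul (Real.exp_pos _).ne' hsum, Real.log_exp, neg_add_eq_sub]

theorem Real.log_one_add_exp_sub_eq_add_log_add (x z : ℝ) :
    Real.log (1 + Real.exp (x - z)) = x + Real.log (Real.exp (-x) + Real.exp (-z)) := by
  have h : 1 + Real.exp (x - z) = Real.exp x * (Real.exp (-x) + Real.exp (-z)) := by
    rw [mul_add, ← Real.exp_add, ← Real.exp_add, add_neg_cancel, Real.exp_zero, ← sub_eq_add_neg]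
  have hsum : Real.exp (-x) + Real.exp (-z) ≠ 0 := by positivity
  rw [h, Real.log_mul (Real.exp_pos _).ne' hsum, Real.log_exp]

theorem kernel_product_eq_exp (hbar γ γ' x x' z z' y : ℝ) :
    Iker hbar x y * Jker hbar γ x' y * Iker hbar y z' * Jker hbar γ' y z =
      Complex.exp (Complex.I / hbar * (γ * (x' - y) + γ' * (y - z)) - (1 / hbar : ℝ) *
        ((Real.exp x + Real.exp z) * Real.exp (-y)
          + (Real.exp (-x') + Real.exp (-z')) * Real.exp y : ℝ)) := by
  simp only [Iker, Jker, ← Complex.exp_add]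
  congr 1
  simp only [Real.exp_sub, Real.exp_neg]
  push_cast
  ring

theorem Real.mul_exp_neg_sub_add_mul_exp_sub {a b c : ℝ} (hc : b * Real.exp c = a) (y : ℝ) :
    a * Real.exp (-(c - y)) + b * Real.exp (c - y) = a * Real.exp (-y) + b * Real.exp y := by
  subst hc
  simp only [neg_sub, Real.exp_sub, Real.exp_neg]
  field_simp
  ring

def reflectionCentre (x x' z z' : ℝ) : ℝ :=
  Real.log (Real.exp x + Real.exp z) - Real.log (Real.exp (-x') + Real.exp (-z'))

theorem mul_exp_reflectionCentre (x x' z z' : ℝ) :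
    (Real.exp (-x') + Real.exp (-z')) * Real.exp (reflectionCentre x x' z z')
      = Real.exp x + Real.exp z := by
  rw [reflectionCentre, Real.exp_sub, Real.exp_log (by positivity), Real.exp_log (by positivity)]
  field_simp

theorem kernel_product_mul_Yker_eq_reflect (hbar γ γ' x x' z z' y : ℝ) :
    Iker hbar x y * Jker hbar γ x' y * Iker hbar y z' * Jker hbar γ' y z * Yker hbar (γ - γ') x z =
      Yker hbar (γ - γ') x' z' *
        (Iker hbar x (reflectionCentre x x' z z' - y)
          * Jker hbar γ' x' (reflectionCentre x x' z z' - y)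
          * Iker hbar (reflectionCentre x x' z z' - y) z'
          * Jker hbar γ (reflectionCentre x x' z z' - y) z) := by
  rw [kernel_product_eq_exp, kernel_product_eq_exp,
    Real.mul_exp_neg_sub_add_mul_exp_sub (mul_exp_reflectionCentre x x' z z'), Yker_eq_exp,
    Yker_eq_exp, Real.log_one_add_exp_sub_eq_log_add_sub x z,
    Real.log_one_add_exp_sub_eq_add_log_add x' z', ← Complex.exp_add, ← Complex.exp_add]
  congr 1
  simp only [reflectionCentre]
  push_cast
  ring

theorem exchange_identity_general (hbar : ℝ)
    (xk xk1 zkm zk γ γ' : ℝ) :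
    (∫ y : ℝ, Iker hbar xk y * Jker hbar γ xk1 y * Iker hbar y zk * Jker hbar γ' y zkm)
        * Yker hbar (γ - γ') xk zkm
      = Yker hbar (γ - γ') xk1 zk
        * ∫ y : ℝ, Iker hbar xk y * Jker hbar γ' xk1 y * Iker hbar y zk * Jker hbar γ y zkm := by
  rw [← integral_mul_const]
  simp_rw [kernel_product_mul_Yker_eq_reflect]
  rw [integral_const_mul]
  congr 1
  exact integral_sub_left_eq_self
    (fun y => Iker hbar xk y * Jker hbar γ' xk1 y * Iker hbar y zk * Jker hbar γ y zkm) volume _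

theorem exchange_identity (hbar : ℝ) (hh : 0 < hbar)
    (xk xk1 zkm zk γ γ' : ℝ) :
    (∫ y : ℝ, Iker hbar xk y * Jker hbar γ xk1 y * Iker hbar y zk * Jker hbar γ' y zkm)
        * Yker hbar (γ - γ') xk zkm
      = Yker hbar (γ - γ') xk1 zk
        * ∫ y : ℝ, Iker hbar xk y * Jker hbar γ' xk1 y * Iker hbar y zk * Jker hbar γ y zkm :=
  exchange_identity_general hbar xk xk1 zkm zk γ γ'

end
end

section
/- Define the kernel Λ_u(x_1,…,x_N; y_1,…,y_{N−1}) = exp{(i/ħ)u(Σ_{n=1}^N x_n − Σ_{n=1}^{N−1} y_n) − (1/ħ)Σ_{n=1}^{N−1}(e^{y_n−x_{n+1}} + e^{x_n−y_n})}. Then for each m with 0 ≤ m ≤ N−1, the operator A_m(u) (acting on the x-variables) satisfies A_m(u) Λ_u(x;y) = (−i)^m exp(Σ_{j=1}^m (x_j − y_j)) · Λ_u(x;y). -/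
noncomputable section

open Complex

/-- Complex-valued functions of countably many real coordinates `x 1, x 2, …`. -/
abbrev TodaFun := (ℕ → ℝ) → ℂ

/-- The momentum operator of the `n`-th particle, `p_n = −iħ ∂/∂x_n`. -/
def pOp (hbar : ℝ) (n : ℕ) (f : TodaFun) : TodaFun :=
  fun x => (-Complex.I * hbar) * deriv (fun t : ℝ => f (Function.update x n t)) (x n)

/-- The Lax matrix `L_n(u) = [[u − p_n, e^{−x_n}], [−e^{x_n}, 0]]`,
as a 2×2 matrix of operators on functions. -/
def Lax (hbar : ℝ) (u : ℂ) (n : ℕ) : Fin 2 → Fin 2 → (TodaFun → TodaFun) :=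
  ![![fun f x => u * f x - pOp hbar n f x, fun f x => (Real.exp (-(x n)) : ℂ) * f x],
    ![fun f x => (-Real.exp (x n) : ℝ) * f x, fun _ _ => 0]]

/-- Product of 2×2 matrices of operators: `(AB)_{ij} f = A_{i0}(B_{0j} f) + A_{i1}(B_{1j} f)`. -/
def mulOp (A B : Fin 2 → Fin 2 → (TodaFun → TodaFun)) : Fin 2 → Fin 2 → (TodaFun → TodaFun) :=
  fun i j f x => A i 0 (B 0 j f) x + A i 1 (B 1 j f) x

/-- The monodromy matrix `T_N(u) = L_N(u) ⋯ L_1(u)`, with `T_0 = Id`. -/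
def Tmat (hbar : ℝ) (u : ℂ) : ℕ → (Fin 2 → Fin 2 → (TodaFun → TodaFun))
  | 0 => ![![fun f => f, fun _ _ => 0], ![fun _ _ => 0, fun f => f]]
  | (n + 1) => mulOp (Lax hbar u (n + 1)) (Tmat hbar u n)

/-- `A_N(u)`: the (1,1) entry of the monodromy matrix. -/
def Aop (hbar : ℝ) (u : ℂ) (N : ℕ) : TodaFun → TodaFun := Tmat hbar u N 0 0

/-- `B_N(u)`: the (1,2) entry of the monodromy matrix. -/
def Bop (hbar : ℝ) (u : ℂ) (N : ℕ) : TodaFun → TodaFun := Tmat hbar u N 0 1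

/-- `C_N(u)`: the (2,1) entry of the monodromy matrix. -/
def Cop (hbar : ℝ) (u : ℂ) (N : ℕ) : TodaFun → TodaFun := Tmat hbar u N 1 0

/-- `D_N(u)`: the (2,2) entry of the monodromy matrix. -/
def Dop (hbar : ℝ) (u : ℂ) (N : ℕ) : TodaFun → TodaFun := Tmat hbar u N 1 1

/-- The kernel
`Λ_u(x;y) = exp{(i/ħ)u(Σ_{n=1}^N x_n − Σ_{n=1}^{N−1} y_n)
  − (1/ħ)Σ_{n=1}^{N−1}(e^{y_n−x_{n+1}} + e^{x_n−y_n})}`. -/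
def LamKer (hbar : ℝ) (N : ℕ) (u : ℂ) (y : ℕ → ℝ) : TodaFun :=
  fun x => Complex.exp (Complex.I * u / hbar
    * (((∑ n ∈ Finset.Icc 1 N, x n) - ∑ n ∈ Finset.Icc 1 (N - 1), y n : ℝ) : ℂ)
    - ((1 / hbar) * ∑ n ∈ Finset.Icc 1 (N - 1),
        (Real.exp (y n - x (n + 1)) + Real.exp (x n - y n)) : ℝ))

/-!
The kernel is an exponential whose exponent depends on `x_{m+1}` only through
`i u x_{m+1}/ħ − (e^{y_m − x_{m+1}} + e^{x_{m+1} − y_{m+1}})/ħ` (the first exponential is absent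
for `m = 0`), so for `m + 1 ≤ N − 1` the operator `u − p_{m+1}` acts on `Λ_u` as multiplication by
`−i (e^{x_{m+1} − y_{m+1}} − e^{y_m − x_{m+1}})`. In the recurrence
`A_{m+2} = (u − p_{m+2}) A_{m+1} − e^{x_{m+1} − x_{m+2}} A_m` the prefactor
`e^{Σ_{j ≤ m+1} (x_j − y_j)}` of `A_{m+1} Λ_u` does not involve `x_{m+2}`, and the
`e^{y_{m+1} − x_{m+2}}` part of the first term cancels the second term, since `(−i)^{m+1} i = (−i)^m`.
-/

open Finset Function

lemma hasDerivAt_update_apply {ι : Type*} [DecidableEq ι] (x : ι → ℝ) (k n : ι) :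
    HasDerivAt (fun t => update x k t n) (if n = k then 1 else 0) (x k) := by
  by_cases h : n = k
  · subst h; simpa using hasDerivAt_id' (x n)
  · simpa [h] using hasDerivAt_const (x k) (x n)

lemma sum_Icc_update_sub_of_lt {m k : ℕ} (hmk : m < k) (x y : ℕ → ℝ) (t : ℝ) :
    ∑ j ∈ Icc 1 m, (update x k t j - y j) = ∑ j ∈ Icc 1 m, (x j - y j) :=
  sum_congr rfl fun j hj => by rw [update_of_ne (by grind)]

section

variable (hbar : ℝ) (u : ℂ)

lemma Aop_succ (n : ℕ) (f : TodaFun) (x : ℕ → ℝ) :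
    Aop hbar u (n + 1) f x = u * Aop hbar u n f x - pOp hbar (n + 1) (Aop hbar u n f) x
      + (Real.exp (-x (n + 1)) : ℂ) * Cop hbar u n f x := by
  simp [Aop, Cop, Tmat, mulOp, Lax]

lemma Cop_succ (n : ℕ) (f : TodaFun) (x : ℕ → ℝ) :
    Cop hbar u (n + 1) f x = -(Real.exp (x (n + 1)) : ℂ) * Aop hbar u n f x := by
  simp [Aop, Cop, Tmat, mulOp, Lax]

lemma Aop_one (f : TodaFun) (x : ℕ → ℝ) :
    Aop hbar u 1 f x = u * f x - pOp hbar 1 f x := by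
  rw [Aop_succ]
  simp [Cop, Tmat, Aop]

lemma Aop_add_two (n : ℕ) (f : TodaFun) (x : ℕ → ℝ) :
    Aop hbar u (n + 2) f x = u * Aop hbar u (n + 1) f x
      - pOp hbar (n + 2) (Aop hbar u (n + 1) f) x
      - (Real.exp (x (n + 1) - x (n + 2)) : ℂ) * Aop hbar u n f x := by
  rw [Aop_succ, Cop_succ, sub_eq_add_neg (x (n + 1)), Real.exp_add]
  push_cast
  ring

lemma pOp_mul_of_update_eq {k : ℕ} {g f : TodaFun} {x : ℕ → ℝ}
    (hg : ∀ t, g (update x k t) = g x) :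
    pOp hbar k (fun z => g z * f z) x = g x * pOp hbar k f x := by
  simp only [pOp, hg, deriv_const_mul_field']
  ring

end

variable {hbar : ℝ} {u : ℂ} {N : ℕ} {y : ℕ → ℝ}

lemma hasDerivAt_LamKer_update (x : ℕ → ℝ) {m : ℕ} (hm : m + 1 ≤ N - 1) :
    HasDerivAt (fun t => LamKer hbar N u y (update x (m + 1) t))
      ((I * u / hbar - ((1 / hbar) * (Real.exp (x (m + 1) - y (m + 1))
        - if m = 0 then 0 else Real.exp (y m - x (m + 1))) : ℝ)) * LamKer hbar N u y x)
      (x (m + 1)) := by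
  have hlinear : HasDerivAt (fun t => ∑ n ∈ Icc 1 N, update x (m + 1) t n
      - ∑ n ∈ Icc 1 (N - 1), y n) 1 (x (m + 1)) := by
    have := (HasDerivAt.sum fun n (_ : n ∈ Icc 1 N) => hasDerivAt_update_apply x (m + 1) n).sub_const
      (∑ n ∈ Icc 1 (N - 1), y n)
    simpa [show m + 1 ≤ N by omega] using this
  have hpotential := HasDerivAt.fun_sum (u := Icc 1 (N - 1))
    (A := fun n t => Real.exp (y n - update x (m + 1) t (n + 1))
      + Real.exp (update x (m + 1) t n - y n)) fun n _ =>
      (((hasDerivAt_update_apply x (m + 1) (n + 1)).const_sub (y n)).exp).add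
        (((hasDerivAt_update_apply x (m + 1) n).sub_const (y n)).exp)
  have hsum : ∑ n ∈ Icc 1 (N - 1), (Real.exp (y n - update x (m + 1) (x (m + 1)) (n + 1))
      * -(if n + 1 = m + 1 then 1 else 0) + Real.exp (update x (m + 1) (x (m + 1)) n - y n)
      * if n = m + 1 then 1 else 0) = Real.exp (x (m + 1) - y (m + 1))
        - if m = 0 then 0 else Real.exp (y m - x (m + 1)) := by
    simp only [update_eq_self, Nat.add_right_cancel_iff, mul_neg, mul_ite, mul_one, mul_zero,
      sum_add_distrib, sum_neg_distrib, sum_ite_eq', mem_Icc]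
    split_ifs <;> first | omega | ring
  rw [hsum] at hpotential
  have hφ := ((hlinear.ofReal_comp).const_mul (I * u / hbar)).fun_sub
    ((hpotential.const_mul (1 / hbar)).ofReal_comp)
  refine hφ.cexp.congr_deriv ?_
  rw [update_eq_self, Complex.ofReal_one, mul_one, mul_comm]
  rfl

lemma pOp_LamKer (hh : hbar ≠ 0) (x : ℕ → ℝ) {m : ℕ} (hm : m + 1 ≤ N - 1) :
    pOp hbar (m + 1) (LamKer hbar N u y) x
      = (u + I * (Real.exp (x (m + 1) - y (m + 1))
        - if m = 0 then 0 else Real.exp (y m - x (m + 1)) : ℝ)) * LamKer hbar N u y x := by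
  rw [pOp, (hasDerivAt_LamKer_update x hm).deriv]
  have : (hbar : ℂ) ≠ 0 := by exact_mod_cast hh
  simp only [Complex.ofReal_mul, Complex.ofReal_div, Complex.ofReal_one]
  field_simp
  linear_combination -u * LamKer hbar N u y x * I_sq

lemma Aop_LamKer (hh : hbar ≠ 0) (m : ℕ) (hm : m ≤ N - 1) (x : ℕ → ℝ) :
    Aop hbar u m (LamKer hbar N u y) x
      = (-I) ^ m * (Real.exp (∑ j ∈ Icc 1 m, (x j - y j)) : ℝ) * LamKer hbar N u y x := by
  induction m using Nat.twoStepInduction generalizing x with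
  | zero => simp [Aop, Tmat]
  | one =>
    rw [Aop_one, pOp_LamKer hh x (m := 0) hm]
    simp only [zero_add, ↓reduceIte, sub_zero, pow_one, Icc_self, sum_singleton]
    ring
  | more n ih0 ih1 =>
    have hA : Aop hbar u (n + 1) (LamKer hbar N u y) = fun z =>
        ((-I) ^ (n + 1) * (Real.exp (∑ j ∈ Icc 1 (n + 1), (z j - y j)) : ℂ))
          * LamKer hbar N u y z := funext (ih1 (by omega))
    rw [Aop_add_two, hA, pOp_mul_of_update_eq hbar (g := fun z =>
        (-I) ^ (n + 1) * (Real.exp (∑ j ∈ Icc 1 (n + 1), (z j - y j)) : ℂ))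
        (fun t => by rw [sum_Icc_update_sub_of_lt (by omega)]),
      pOp_LamKer hh x hm, ih0 (by omega) x, if_neg n.succ_ne_zero]
    set E := Real.exp (∑ j ∈ Icc 1 n, (x j - y j))
    set a := Real.exp (x (n + 1) - y (n + 1))
    set b := Real.exp (y (n + 1) - x (n + 2))
    set c := Real.exp (x (n + 2) - y (n + 2))
    have hEa : Real.exp (∑ j ∈ Icc 1 (n + 1), (x j - y j)) = E * a := by
      rw [sum_Icc_succ_top (by omega), Real.exp_add]
    have hEac : Real.exp (∑ j ∈ Icc 1 (n + 2), (x j - y j)) = E * a * c := by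
      rw [sum_Icc_succ_top (by omega), Real.exp_add, hEa]
    have hab : Real.exp (x (n + 1) - x (n + 2)) = a * b := by
      rw [← Real.exp_add]; ring_nf
    beta_reduce
    rw [hEa, hEac, hab]
    simp only [Complex.ofReal_mul, Complex.ofReal_sub]
    linear_combination -(-I) ^ n * E * a * b * LamKer hbar N u y x * I_sq

theorem Aop_on_LamKer_general (hbar : ℝ) (hh : 0 < hbar) (u : ℂ) (N m : ℕ)
    (hm : m ≤ N - 1) (y : ℕ → ℝ) :
    ∀ x : ℕ → ℝ,
      Aop hbar u m (LamKer hbar N u y) x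
        = (-Complex.I) ^ m * (Real.exp (∑ j ∈ Finset.Icc 1 m, (x j - y j)) : ℝ)
            * LamKer hbar N u y x :=
  Aop_LamKer hh.ne' m hm

theorem Aop_on_LamKer (hbar : ℝ) (hh : 0 < hbar) (u : ℂ) (N m : ℕ) (hN : 1 ≤ N)
    (hm : m ≤ N - 1) (y : ℕ → ℝ) :
    ∀ x : ℕ → ℝ,
      Aop hbar u m (LamKer hbar N u y) x
        = (-Complex.I) ^ m * (Real.exp (∑ j ∈ Finset.Icc 1 m, (x j - y j)) : ℝ)
            * LamKer hbar N u y x :=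
  Aop_on_LamKer_general hbar hh u N m hm y

end
end

section
/- With Λ_u(x;y) as above and B_m(u) the (1,2) entry of T_m(u), for 1 ≤ m ≤ N−1 one has B_m(u) Λ_u(x;y) = e^{−x_1} (−i)^{m−1} Σ_{k=1}^m (−1)^{k+1} (∏_{j=2}^k e^{y_{j−1}−x_j}) (∏_{s=k+1}^m e^{x_s−y_s}) · Λ_u(x;y). -/
noncomputable section

open Complex

/-- Auxiliary product `P_k = ∏_{j=2}^k e^{y_{j-1}-x_j}`. -/
def Pf (x y : ℕ → ℝ) (k : ℕ) : ℂ := ∏ j ∈ Finset.Icc 2 k, (Real.exp (y (j - 1) - x j) : ℂ)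

/-- Auxiliary sum `S_m = Σ_{k=1}^m (-1)^{k+1} P_k ∏_{s=k+1}^m e^{x_s-y_s}`. -/
def Sf (x y : ℕ → ℝ) (m : ℕ) : ℂ :=
  ∑ k ∈ Finset.Icc 1 m, (-1 : ℂ) ^ (k + 1) * Pf x y k
    * ∏ s ∈ Finset.Icc (k + 1) m, (Real.exp (x s - y s) : ℂ)

lemma Sf_zero (x y : ℕ → ℝ) : Sf x y 0 = 0 := by simp [Sf]

lemma Pf_succ (x y : ℕ → ℝ) (n : ℕ) :
    Pf x y (n + 2) = Pf x y (n + 1) * (Real.exp (y (n + 1) - x (n + 2)) : ℂ) := by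
  unfold Pf
  rw [Finset.prod_Icc_succ_top (by omega)]
  norm_num

lemma Sf_succ (x y : ℕ → ℝ) (n : ℕ) :
    Sf x y (n + 1) = (Real.exp (x (n + 1) - y (n + 1)) : ℂ) * Sf x y n
      + (-1 : ℂ) ^ n * Pf x y (n + 1) := by
  unfold Sf
  rw [Finset.sum_Icc_succ_top (by omega)]
  have h1 : ∀ k ∈ Finset.Icc 1 n,
      (-1 : ℂ) ^ (k + 1) * Pf x y k * ∏ s ∈ Finset.Icc (k + 1) (n + 1), (Real.exp (x s - y s) : ℂ)
      = (Real.exp (x (n + 1) - y (n + 1)) : ℂ)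
        * ((-1 : ℂ) ^ (k + 1) * Pf x y k * ∏ s ∈ Finset.Icc (k + 1) n, (Real.exp (x s - y s) : ℂ)) := by
    intro k hk
    rw [Finset.mem_Icc] at hk
    rw [Finset.prod_Icc_succ_top (by omega)]
    ring
  rw [Finset.sum_congr rfl h1, ← Finset.mul_sum]
  have h2 : Finset.Icc (n + 1 + 1) (n + 1) = ∅ := Finset.Icc_eq_empty (by omega)
  rw [h2]
  have h3 : (-1 : ℂ) ^ (n + 1 + 1) = (-1 : ℂ) ^ n := by
    rw [pow_succ, pow_succ]; ring
  rw [h3]; ring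

lemma Sf_key (x y : ℕ → ℝ) (n : ℕ) :
    ((Real.exp (y (n + 1) - x (n + 2)) : ℂ) - (Real.exp (x (n + 2) - y (n + 2)) : ℂ))
        * Sf x y (n + 1) - (Real.exp (x (n + 1) - x (n + 2)) : ℂ) * Sf x y n
      = - Sf x y (n + 2) := by
  have h1 := Sf_succ x y (n + 1)
  have h2 := Sf_succ x y n
  have h3 := Pf_succ x y n
  have hE : (Real.exp (y (n + 1) - x (n + 2)) : ℂ) * (Real.exp (x (n + 1) - y (n + 1)) : ℂ)
      = (Real.exp (x (n + 1) - x (n + 2)) : ℂ) := by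
    rw [← Complex.ofReal_mul, ← Real.exp_add]
    norm_num
  have h4 : (-1 : ℂ) ^ (n + 1) = -(-1 : ℂ) ^ n := by rw [pow_succ]; ring
  rw [h1, h2, h3, h4]
  linear_combination (Sf x y n) * hE

lemma Pf_update (x y : ℕ → ℝ) (m k : ℕ) (t : ℝ) (h : k < m) :
    Pf (Function.update x m t) y k = Pf x y k := by
  unfold Pf
  refine Finset.prod_congr rfl fun j hj => ?_
  rw [Finset.mem_Icc] at hj
  rw [Function.update_of_ne (by omega)]

lemma Sf_update (x y : ℕ → ℝ) (m n : ℕ) (t : ℝ) (h : n < m) :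
    Sf (Function.update x m t) y n = Sf x y n := by
  unfold Sf
  refine Finset.sum_congr rfl fun k hk => ?_
  rw [Finset.mem_Icc] at hk
  rw [Pf_update x y m k t (by omega)]
  congr 1
  refine Finset.prod_congr rfl fun s hs => ?_
  rw [Finset.mem_Icc] at hs
  rw [Function.update_of_ne (by omega)]

lemma lam_hasDeriv (hbar : ℝ) (u : ℂ) (N m : ℕ) (hN : 1 ≤ N) (hm2 : 2 ≤ m)
    (hmN : m ≤ N - 1) (y x : ℕ → ℝ) :
    HasDerivAt (fun t => LamKer hbar N u y (Function.update x m t))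
      ((Complex.I * u / hbar + ((Real.exp (y (m - 1) - x m) / hbar : ℝ) : ℂ)
          - ((Real.exp (x m - y m) / hbar : ℝ) : ℂ)) * LamKer hbar N u y x) (x m) := by
  set c₁ : ℝ := (∑ n ∈ Finset.Icc 1 N \ {m}, x n) - ∑ n ∈ Finset.Icc 1 (N - 1), y n with hc₁
  set c₂ : ℝ := (∑ n ∈ Finset.Icc 1 (N - 1) \ {m - 1, m},
      (Real.exp (y n - x (n + 1)) + Real.exp (x n - y n)))
      + Real.exp (x (m - 1) - y (m - 1)) + Real.exp (y m - x (m + 1)) with hc₂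
  have hmem : m ∈ Finset.Icc 1 N := Finset.mem_Icc.2 ⟨by omega, by omega⟩
  have hsub : ({m - 1, m} : Finset ℕ) ⊆ Finset.Icc 1 (N - 1) := by
    intro n hn
    simp only [Finset.mem_insert, Finset.mem_singleton] at hn
    rcases hn with h | h <;> (subst h; exact Finset.mem_Icc.2 ⟨by omega, by omega⟩)
  have hfun : (fun t => LamKer hbar N u y (Function.update x m t))
      = fun t => Complex.exp (Complex.I * u / hbar * ((c₁ + t : ℝ) : ℂ)
          - (((1 / hbar) * (c₂ + (Real.exp (y (m - 1) - t) + Real.exp (t - y m))) : ℝ) : ℂ)) := by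
    funext t
    unfold LamKer
    have hs1 : (∑ n ∈ Finset.Icc 1 N, Function.update x m t n)
        - ∑ n ∈ Finset.Icc 1 (N - 1), y n = c₁ + t := by
      rw [Finset.sum_update_of_mem hmem, hc₁]; ring
    have hs2 : ∑ n ∈ Finset.Icc 1 (N - 1),
        (Real.exp (y n - Function.update x m t (n + 1)) + Real.exp (Function.update x m t n - y n))
        = c₂ + (Real.exp (y (m - 1) - t) + Real.exp (t - y m)) := by
      rw [← Finset.sum_sdiff (f := fun n =>
        (Real.exp (y n - Function.update x m t (n + 1)) + Real.exp (Function.update x m t n - y n)))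
        hsub]
      have hrest : ∑ n ∈ Finset.Icc 1 (N - 1) \ {m - 1, m},
          (Real.exp (y n - Function.update x m t (n + 1)) + Real.exp (Function.update x m t n - y n))
          = ∑ n ∈ Finset.Icc 1 (N - 1) \ {m - 1, m},
          (Real.exp (y n - x (n + 1)) + Real.exp (x n - y n)) := by
        refine Finset.sum_congr rfl fun n hn => ?_
        rw [Finset.mem_sdiff, Finset.mem_insert, Finset.mem_singleton, Finset.mem_Icc] at hn
        push_neg at hn
        rw [Function.update_of_ne (by omega), Function.update_of_ne (by omega)]
      have hpair : ∑ n ∈ ({m - 1, m} : Finset ℕ),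
          (Real.exp (y n - Function.update x m t (n + 1)) + Real.exp (Function.update x m t n - y n))
          = (Real.exp (y (m - 1) - t) + Real.exp (x (m - 1) - y (m - 1)))
            + (Real.exp (y m - x (m + 1)) + Real.exp (t - y m)) := by
        rw [Finset.sum_pair (by omega : m - 1 ≠ m)]
        have e1 : m - 1 + 1 = m := by omega
        rw [e1, Function.update_self, Function.update_of_ne (by omega : m - 1 ≠ m),
          Function.update_of_ne (by omega : m + 1 ≠ m)]
      rw [hrest, hpair, hc₂]
      ring
    rw [hs1, hs2]
  rw [hfun]
  have h₁ : HasDerivAt (fun t : ℝ => ((c₁ + t : ℝ) : ℂ)) 1 (x m) := by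
    have := ((hasDerivAt_id (x m)).const_add c₁).ofReal_comp
    simpa using this
  have h₂ : HasDerivAt (fun t : ℝ =>
      (((1 / hbar) * (c₂ + (Real.exp (y (m - 1) - t) + Real.exp (t - y m))) : ℝ) : ℂ))
      (((1 / hbar) * (-Real.exp (y (m - 1) - x m) + Real.exp (x m - y m)) : ℝ) : ℂ) (x m) := by
    refine HasDerivAt.ofReal_comp ?_
    have ha : HasDerivAt (fun t : ℝ => Real.exp (y (m - 1) - t)) (-Real.exp (y (m - 1) - x m)) (x m) := by
      have := (((hasDerivAt_id (x m)).const_sub (y (m - 1))).exp)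
      simpa using this
    have hb : HasDerivAt (fun t : ℝ => Real.exp (t - y m)) (Real.exp (x m - y m)) (x m) := by
      have := (((hasDerivAt_id (x m)).sub_const (y m)).exp)
      simpa using this
    exact ((ha.add hb).const_add c₂).const_mul _
  have h₃ : HasDerivAt (fun t : ℝ => Complex.I * u / hbar * ((c₁ + t : ℝ) : ℂ)
      - (((1 / hbar) * (c₂ + (Real.exp (y (m - 1) - t) + Real.exp (t - y m))) : ℝ) : ℂ))
      (Complex.I * u / hbar * 1
        - (((1 / hbar) * (-Real.exp (y (m - 1) - x m) + Real.exp (x m - y m)) : ℝ) : ℂ)) (x m) :=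
    (h₁.const_mul _).sub h₂
  have h₄ := h₃.cexp
  have hval : Complex.exp (Complex.I * u / hbar * ((c₁ + x m : ℝ) : ℂ)
      - (((1 / hbar) * (c₂ + (Real.exp (y (m - 1) - x m) + Real.exp (x m - y m))) : ℝ) : ℂ))
      = LamKer hbar N u y x := by
    have := congrFun hfun (x m)
    rw [Function.update_eq_self] at this
    exact this.symm
  convert h₄ using 1
  rw [hval]
  push_cast
  ring

lemma Bop_zero (hbar : ℝ) (u : ℂ) (f : TodaFun) (x : ℕ → ℝ) : Bop hbar u 0 f x = 0 := by
  simp [Bop, Tmat]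

lemma Bop_rec (hbar : ℝ) (u : ℂ) (n : ℕ) (f : TodaFun) (x : ℕ → ℝ) :
    Bop hbar u (n + 1) f x = u * Bop hbar u n f x - pOp hbar (n + 1) (Bop hbar u n f) x
      + (Real.exp (-(x (n + 1))) : ℝ) * Dop hbar u n f x := by
  simp [Bop, Dop, Tmat, mulOp, Lax]

lemma Dop_rec (hbar : ℝ) (u : ℂ) (n : ℕ) (f : TodaFun) (x : ℕ → ℝ) :
    Dop hbar u (n + 1) f x = (-Real.exp (x (n + 1)) : ℝ) * Bop hbar u n f x := by
  simp [Bop, Dop, Tmat, mulOp, Lax]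

lemma Bop_step (hbar : ℝ) (hh : 0 < hbar) (u : ℂ) (N n : ℕ) (hN : 1 ≤ N) (h : n + 2 ≤ N - 1)
    (y : ℕ → ℝ) (K K' : ℂ)
    (ih1 : ∀ z, Bop hbar u (n + 1) (LamKer hbar N u y) z
        = (Real.exp (-(z 1)) : ℝ) * K * Sf z y (n + 1) * LamKer hbar N u y z)
    (x : ℕ → ℝ)
    (ih0 : Bop hbar u n (LamKer hbar N u y) x
        = (Real.exp (-(x 1)) : ℝ) * K' * Sf x y n * LamKer hbar N u y x)
    (hK : K * Complex.I * Sf x y n = K' * Sf x y n) :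
    Bop hbar u (n + 2) (LamKer hbar N u y) x
      = (Real.exp (-(x 1)) : ℝ) * (K * (-Complex.I)) * Sf x y (n + 2) * LamKer hbar N u y x := by
  have hne : (hbar : ℂ) ≠ 0 := by exact_mod_cast hh.ne'
  have hrec := Bop_rec hbar u (n + 1) (LamKer hbar N u y) x
  have hD := Dop_rec hbar u n (LamKer hbar N u y) x
  have hfun2 : (fun t => Bop hbar u (n + 1) (LamKer hbar N u y) (Function.update x (n + 2) t))
      = fun t => ((Real.exp (-(x 1)) : ℝ) * K * Sf x y (n + 1))
          * LamKer hbar N u y (Function.update x (n + 2) t) := by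
    funext t
    rw [ih1, Function.update_of_ne (by omega : (1 : ℕ) ≠ n + 2),
      Sf_update x y (n + 2) (n + 1) t (by omega)]
  have hder := (lam_hasDeriv hbar u N (n + 2) hN (by omega) h y x).const_mul
      ((Real.exp (-(x 1)) : ℝ) * K * Sf x y (n + 1))
  have e21 : n + 2 - 1 = n + 1 := by omega
  rw [e21] at hder
  have hp : pOp hbar (n + 2) (Bop hbar u (n + 1) (LamKer hbar N u y)) x
      = (-Complex.I * hbar) * (((Real.exp (-(x 1)) : ℝ) * K * Sf x y (n + 1))
         * ((Complex.I * u / hbar + ((Real.exp (y (n + 1) - x (n + 2)) / hbar : ℝ) : ℂ)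
            - ((Real.exp (x (n + 2) - y (n + 2)) / hbar : ℝ) : ℂ)) * LamKer hbar N u y x)) := by
    unfold pOp
    rw [hfun2, hder.deriv]
  rw [show n + 2 = n + 1 + 1 from rfl] at *
  rw [hrec, hp, ih1 x, hD, ih0]
  have hkey := Sf_key x y n
  have hexp : (Real.exp (x (n + 1) - x (n + 2)) : ℂ)
      = (Real.exp (-(x (n + 2))) : ℝ) * (Real.exp (x (n + 1)) : ℝ) := by
    rw [← Complex.ofReal_mul, ← Real.exp_add]
    norm_num
    ring_nf
  rw [show n + 1 + 1 = n + 2 from rfl] at *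
  linear_combination (norm := (push_cast; field_simp; ring_nf; simp only [Complex.I_sq]; ring1))
    (Complex.I * (Real.exp (-(x 1)) : ℂ) * K * LamKer hbar N u y x) * hkey
    + (Complex.I * (Real.exp (-(x 1)) : ℂ) * K * LamKer hbar N u y x * Sf x y n) * hexp
    + ((Real.exp (-(x (n + 2))) : ℂ) * (Real.exp (x (n + 1)) : ℂ)
        * (Real.exp (-(x 1)) : ℂ) * LamKer hbar N u y x) * hK

lemma Sf_one (x y : ℕ → ℝ) : Sf x y 1 = 1 := by
  simp [Sf, Pf, Finset.Icc_self]

lemma Bop_one (hbar : ℝ) (u : ℂ) (N : ℕ) (y x : ℕ → ℝ) :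
    Bop hbar u 1 (LamKer hbar N u y) x
      = (Real.exp (-(x 1)) : ℝ) * LamKer hbar N u y x := by
  rw [show (1 : ℕ) = 0 + 1 from rfl, Bop_rec]
  have hB0 : Bop hbar u 0 (LamKer hbar N u y) = fun _ => 0 :=
    funext fun z => Bop_zero hbar u _ z
  rw [hB0]
  have hp0 : pOp hbar (0 + 1) (fun _ => (0 : ℂ)) x = 0 := by
    simp [pOp]
  rw [hp0]
  have hD0 : Dop hbar u 0 (LamKer hbar N u y) x = LamKer hbar N u y x := by
    simp [Dop, Tmat]
  rw [hD0]
  ring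

theorem Bop_on_LamKer (hbar : ℝ) (hh : 0 < hbar) (u : ℂ) (N m : ℕ) (hN : 1 ≤ N)
    (hm : 1 ≤ m) (hmN : m ≤ N - 1) (y : ℕ → ℝ) :
    ∀ x : ℕ → ℝ,
      Bop hbar u m (LamKer hbar N u y) x
        = (Real.exp (-(x 1)) : ℝ) * (-Complex.I) ^ (m - 1)
            * (∑ k ∈ Finset.Icc 1 m, (-1 : ℂ) ^ (k + 1)
                * (∏ j ∈ Finset.Icc 2 k, (Real.exp (y (j - 1) - x j) : ℂ))
                * ∏ s ∈ Finset.Icc (k + 1) m, (Real.exp (x s - y s) : ℂ))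
            * LamKer hbar N u y x := by
  have main : ∀ m, m ≤ N - 1 → ∀ x : ℕ → ℝ,
      Bop hbar u m (LamKer hbar N u y) x
        = (Real.exp (-(x 1)) : ℝ) * (-Complex.I) ^ (m - 1) * Sf x y m
            * LamKer hbar N u y x := by
    intro m
    induction m using Nat.strong_induction_on with
    | _ m ih =>
      rcases m with _ | (_ | n)
      · intro _ x
        simp [Bop_zero, Sf_zero]
      · intro _ x
        rw [Bop_one, Sf_one]
        ring
      · intro hle x
        have ih1 : ∀ z : ℕ → ℝ, Bop hbar u (n + 1) (LamKer hbar N u y) z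
            = (Real.exp (-(z 1)) : ℝ) * (-Complex.I) ^ n * Sf z y (n + 1)
                * LamKer hbar N u y z := by
          intro z
          have := ih (n + 1) (by omega) (by omega) z
          simpa using this
        have ih0 := ih n (by omega) (by omega) x
        have hK : (-Complex.I) ^ n * Complex.I * Sf x y n
            = (-Complex.I) ^ (n - 1) * Sf x y n := by
          rcases n with _ | k
          · simp [Sf_zero]
          · have : (-Complex.I) ^ (k + 1) * Complex.I = (-Complex.I) ^ k := by
              rw [pow_succ, mul_assoc]
              simp [Complex.I_mul_I]
            rw [this]
            simp
        have := Bop_step hbar hh u N n hN (by omega) y ((-Complex.I) ^ n)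
          ((-Complex.I) ^ (n - 1)) ih1 x ih0 hK
        rw [this]
        rw [show (-Complex.I) ^ n * -Complex.I = (-Complex.I) ^ (n + 1) from (pow_succ _ _).symm]
        norm_num
  exact main m hmN

end
end

section
/- Define ψ_{γ_1,γ_2}(x_1,x_2) = ∫_ℝ exp{(i/ħ)[γ_2(x_1+x_2−y) + γ_1 y] − (1/ħ)(e^{y−x_2} + e^{x_1−y})} dy for ħ>0 and real γ_1,γ_2. Then ψ is symmetric under exchange of γ_1 and γ_2: ψ_{γ_1,γ_2}(x_1,x_2) = ψ_{γ_2,γ_1}(x_1,x_2). -/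
open MeasureTheory

noncomputable section

/-- The 2-particle open Toda eigenfunction
`ψ_{γ₁,γ₂}(x₁,x₂) = ∫_ℝ exp{(i/ħ)[γ₂(x₁+x₂−y)+γ₁y] − (1/ħ)(e^{y−x₂}+e^{x₁−y})} dy`. -/
def psi2 (hbar γ1 γ2 x1 x2 : ℝ) : ℂ :=
  ∫ y : ℝ, Complex.exp (Complex.I / hbar * (γ2 * (x1 + x2 - y) + γ1 * y)
    - ((1 / hbar) * (Real.exp (y - x2) + Real.exp (x1 - y)) : ℝ))

theorem psi2_symm (hbar : ℝ) (hh : 0 < hbar) (γ1 γ2 x1 x2 : ℝ) :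
    psi2 hbar γ1 γ2 x1 x2 = psi2 hbar γ2 γ1 x1 x2 := by
  unfold psi2
  rw [← MeasureTheory.integral_sub_left_eq_self
    (fun y : ℝ => Complex.exp (Complex.I / hbar * (γ1 * (x1 + x2 - y) + γ2 * y)
      - ((1 / hbar) * (Real.exp (y - x2) + Real.exp (x1 - y)) : ℝ))) volume (x1 + x2)]
  congr 1
  ext y
  have h1 : x1 + x2 - y - x2 = x1 - y := by ring
  have h2 : x1 - (x1 + x2 - y) = y - x2 := by ring
  simp only [h1, h2]
  congr 1
  push_cast
  ring
end
end
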